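/- Let M = (S,R,V) be a model and [M] = ([S],[R],[V]) its ∘-bisimulation contraction. If R is an equivalence relation (i.e. M is an S5-model), then [R] is also an equivalence relation (i.e. [M] is an S5-model). -/
import Mathlib


/-- A Kripke model. -/
structure Model (W : Type) where
  R : W → W → Prop
  V : ℕ → W → Prop

/-- Z is a ∘-bisimulation on the model M: Z is nonempty and whenever sZs',
(Inv), (∘-Forth) and (∘-Back) hold. -/
def isCircBisim {W : Type} (M : Model W) (Z : W → W → Prop) : Prop :=
  (∃ a b, Z a b) ∧
  ∀ s s', Z s s' →
    ((∀ p, M.V p s ↔ M.V p s') ∧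
     (∀ t, M.R s t → ¬ Z s t → ∃ t', M.R s' t' ∧ Z t t') ∧
     (∀ t', M.R s' t' → ¬ Z s' t' → ∃ t, M.R s t ∧ Z t t'))

/-- The disjoint union of two models. -/
def dsum {W W' : Type} (M : Model W) (M' : Model W') : Model (W ⊕ W') where
  R x y :=
    match x, y with
    | Sum.inl a, Sum.inl b => M.R a b
    | Sum.inr a, Sum.inr b => M'.R a b
    | _, _ => False
  V p x :=
    match x with
    | Sum.inl a => M.V p a
    | Sum.inr a => M'.V p a

/-- (M,s) and (M',s') are ∘-bisimilar: some ∘-bisimulation on the disjoint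
union of M and M' relates s to s'. -/
def circBisimilar {W W' : Type} (M : Model W) (s : W) (M' : Model W') (s' : W') : Prop :=
  ∃ Z, isCircBisim (dsum M M') Z ∧ Z (Sum.inl s) (Sum.inr s')
/-- ∘-bisimilarity between two worlds of the same model M. -/
def eqw {W : Type} (M : Model W) (s t : W) : Prop := circBisimilar M s M t

/-- The ∘-bisimilarity class [s] = {t | s ≃∘ t}. -/
def cls {W : Type} (M : Model W) (s : W) : Set W := {t | eqw M s t}

/-- The worlds of the ∘-bisimulation contraction: the ∘-bisimilarity classes. -/
def ContrW {W : Type} (M : Model W) : Type := {A : Set W // ∃ s, A = cls M s}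

/-- The ∘-bisimulation contraction [M] = ([S],[R],[V]) of M. -/
def contraction {W : Type} (M : Model W) : Model (ContrW M) where
  R A B := ∃ a ∈ A.1, ∃ b ∈ B.1, M.R a b
  V p A := ∃ s, M.V p s ∧ A.1 = cls M s

namespace CB

variable {W : Type}

/-- The union of all ∘-bisimulations on M. -/
def Bis (M : Model W) (a b : W) : Prop := ∃ ζ, isCircBisim M ζ ∧ ζ a b

lemma bis_eq (M : Model W) [Nonempty W] : isCircBisim M (Eq : W → W → Prop) := by
  refine ⟨⟨Classical.arbitrary W, Classical.arbitrary W, rfl⟩, ?_⟩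
  rintro s _ rfl
  exact ⟨fun p => Iff.rfl, fun t ht _ => ⟨t, ht, rfl⟩, fun t ht _ => ⟨t, ht, rfl⟩⟩

lemma bis_symm_clos {M : Model W} {Z} (h : isCircBisim M Z) :
    isCircBisim M (fun a b => Z a b ∨ Z b a) := by
  obtain ⟨⟨a, b, hab⟩, h2⟩ := h
  refine ⟨⟨a, b, Or.inl hab⟩, ?_⟩
  rintro s s' (hss' | hss')
  · obtain ⟨hV, hF, hB⟩ := h2 _ _ hss'
    refine ⟨hV, ?_, ?_⟩
    · intro t ht hnt
      obtain ⟨t', ht', hZ⟩ := hF t ht (fun hq => hnt (Or.inl hq))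
      exact ⟨t', ht', Or.inl hZ⟩
    · intro t' ht' hnt'
      obtain ⟨t, ht, hZ⟩ := hB t' ht' (fun hq => hnt' (Or.inl hq))
      exact ⟨t, ht, Or.inl hZ⟩
  · obtain ⟨hV, hF, hB⟩ := h2 _ _ hss'
    refine ⟨fun p => (hV p).symm, ?_, ?_⟩
    · intro t ht hnt
      obtain ⟨t0, ht0, hZ⟩ := hB t ht (fun hq => hnt (Or.inl hq))
      exact ⟨t0, ht0, Or.inr hZ⟩
    · intro t' ht' hnt'
      obtain ⟨t0, ht0, hZ⟩ := hF t' ht' (fun hq => hnt' (Or.inl hq))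
      exact ⟨t0, ht0, Or.inr hZ⟩

lemma bis_isBisim (M : Model W) [Nonempty W] : isCircBisim M (Bis M) := by
  refine ⟨⟨Classical.arbitrary W, Classical.arbitrary W, Eq, bis_eq M, rfl⟩, ?_⟩
  rintro s s' ⟨ζ, hζ, hss'⟩
  obtain ⟨hV, hF, hB⟩ := hζ.2 _ _ hss'
  refine ⟨hV, ?_, ?_⟩
  · intro t ht hnt
    obtain ⟨t', ht', hZ⟩ := hF t ht (fun hq => hnt ⟨ζ, hζ, hq⟩)
    exact ⟨t', ht', ζ, hζ, hZ⟩
  · intro t' ht' hnt'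
    obtain ⟨t, ht, hZ⟩ := hB t' ht' (fun hq => hnt' ⟨ζ, hζ, hq⟩)
    exact ⟨t, ht, ζ, hζ, hZ⟩

lemma bis_refl (M : Model W) [Nonempty W] (a : W) : Bis M a a := ⟨Eq, bis_eq M, rfl⟩

lemma bis_symm {M : Model W} {a b : W} (h : Bis M a b) : Bis M b a := by
  obtain ⟨ζ, hζ, hab⟩ := h
  exact ⟨_, bis_symm_clos hζ, Or.inr hab⟩

lemma tg_symm {M : Model W} {a b : W} (h : Relation.TransGen (Bis M) a b) :
    Relation.TransGen (Bis M) b a := by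
  induction h with
  | single h => exact Relation.TransGen.single (bis_symm h)
  | tail hT hE ih => exact (Relation.TransGen.single (bis_symm hE)).trans ih

lemma tg_forth {M : Model W} [Nonempty W] {s s' : W}
    (h : Relation.TransGen (Bis M) s s') (t : W) (hRt : M.R s t)
    (hnt : ¬ Relation.TransGen (Bis M) s t) :
    ∃ t', M.R s' t' ∧ Relation.TransGen (Bis M) t t' := by
  induction h with
  | single hE =>
    obtain ⟨t', ht', hZ⟩ := ((bis_isBisim M).2 _ _ hE).2.1 t hRt
      (fun hq => hnt (Relation.TransGen.single hq))
    exact ⟨t', ht', Relation.TransGen.single hZ⟩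
  | @tail b c hT hE ih =>
    obtain ⟨t', ht', hTt'⟩ := ih
    by_cases hbt' : Bis M b t'
    · exact absurd ((hT.tail hbt').trans (tg_symm hTt')) hnt
    · obtain ⟨t'', ht'', hZ⟩ := ((bis_isBisim M).2 _ _ hE).2.1 t' ht' hbt'
      exact ⟨t'', ht'', hTt'.tail hZ⟩

lemma tg_inv {M : Model W} [Nonempty W] {a b : W} (h : Relation.TransGen (Bis M) a b)
    (p : ℕ) : M.V p a ↔ M.V p b := by
  induction h with
  | single hE => exact ((bis_isBisim M).2 _ _ hE).1 p
  | tail hT hE ih => exact ih.trans (((bis_isBisim M).2 _ _ hE).1 p)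

lemma tg_isBisim (M : Model W) [Nonempty W] :
    isCircBisim M (Relation.TransGen (Bis M)) := by
  refine ⟨⟨Classical.arbitrary W, Classical.arbitrary W,
      Relation.TransGen.single (bis_refl M _)⟩, ?_⟩
  intro s s' hss'
  refine ⟨fun p => tg_inv hss' p, fun t ht hnt => tg_forth hss' t ht hnt, ?_⟩
  intro t' ht' hnt'
  obtain ⟨t, ht, hT⟩ := tg_forth (tg_symm hss') t' ht'
    (fun hq => hnt' hq)
  exact ⟨t, ht, tg_symm hT⟩

lemma bis_trans {M : Model W} [Nonempty W] {a b c : W}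
    (hab : Bis M a b) (hbc : Bis M b c) : Bis M a c :=
  ⟨_, tg_isBisim M, (Relation.TransGen.single hab).tail hbc⟩

/-- Lift a ∘-bisimulation on M to one on dsum M M. -/
lemma lift {M : Model W} {ζ} (h : isCircBisim M ζ) :
    isCircBisim (dsum M M) (fun x y => ζ (Sum.elim id id x) (Sum.elim id id y)) := by
  obtain ⟨⟨a, b, hab⟩, h2⟩ := h
  refine ⟨⟨Sum.inl a, Sum.inl b, hab⟩, ?_⟩
  rintro (s | s) (s' | s') hss' <;>
  · obtain ⟨hV, hF, hB⟩ := h2 _ _ hss'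
    refine ⟨fun p => hV p, ?_, ?_⟩
    · rintro (t | t) hRt hnt
      all_goals first
        | exact (hRt : False).elim
        | (obtain ⟨t', ht', hZ⟩ := hF t hRt hnt
           first
             | exact ⟨Sum.inl t', ht', hZ⟩
             | exact ⟨Sum.inr t', ht', hZ⟩)
    · rintro (t' | t') hRt' hnt'
      all_goals first
        | exact (hRt' : False).elim
        | (obtain ⟨t, ht, hZ⟩ := hB t' hRt' hnt'
           first
             | exact ⟨Sum.inl t, ht, hZ⟩
             | exact ⟨Sum.inr t, ht, hZ⟩)

/-- Retag: the element c carrying the same tag as x. -/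
def retag {W : Type} (x : W ⊕ W) (c : W) : W ⊕ W := Sum.map (fun _ => c) (fun _ => c) x

lemma sp_retag (x : W ⊕ W) (c : W) : Sum.elim id id (retag x c) = c := by
  cases x <;> rfl

lemma dR_of_R {M : Model W} {x : W ⊕ W} {c d : W} (h : M.R c d) :
    (dsum M M).R (retag x c) (retag x d) := by
  cases x <;> exact h

lemma dR_retag {M : Model W} {x y : W ⊕ W} (h : (dsum M M).R x y) :
    M.R (Sum.elim id id x) (Sum.elim id id y) ∧ y = retag x (Sum.elim id id y) := by
  rcases x with a | a <;> rcases y with b | b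
  · exact ⟨h, rfl⟩
  · exact (h : False).elim
  · exact (h : False).elim
  · exact ⟨h, rfl⟩

lemma dV_sp {M : Model W} (p : ℕ) (x : W ⊕ W) :
    (dsum M M).V p x ↔ M.V p (Sum.elim id id x) := by
  cases x <;> exact Iff.rfl

lemma retag_R {M : Model W} {x : W ⊕ W} {c : W} (h : M.R (Sum.elim id id x) c) :
    (dsum M M).R x (retag x c) := by
  cases x <;> exact h

lemma retag_R' {M : Model W} {x : W ⊕ W} {c : W} (h : M.R c (Sum.elim id id x)) :
    (dsum M M).R (retag x c) x := by
  cases x <;> exact h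

/-- Project a ∘-bisimulation on dsum M M down to one on M. -/
lemma proj {M : Model W} {Z} (h : isCircBisim (dsum M M) Z) :
    isCircBisim M (fun a b =>
      ∃ x y, Z x y ∧ Sum.elim id id x = a ∧ Sum.elim id id y = b) := by
  obtain ⟨⟨x, y, hxy⟩, h2⟩ := h
  refine ⟨⟨_, _, x, y, hxy, rfl, rfl⟩, ?_⟩
  rintro a b ⟨x, y, hxy, rfl, rfl⟩
  obtain ⟨hV, hF, hB⟩ := h2 _ _ hxy
  refine ⟨?_, ?_, ?_⟩
  · intro p
    exact (dV_sp p x).symm.trans ((hV p).trans (dV_sp p y))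
  · intro c hRc hnc
    obtain ⟨t', ht', hZ⟩ := hF (retag x c) (retag_R hRc)
      (fun hq => hnc ⟨x, retag x c, hq, rfl, sp_retag x c⟩)
    obtain ⟨hR', _⟩ := dR_retag ht'
    exact ⟨Sum.elim id id t', hR', retag x c, t', hZ, sp_retag x c, rfl⟩
  · intro c hRc hnc
    obtain ⟨t, ht, hZ⟩ := hB (retag y c) (retag_R hRc)
      (fun hq => hnc ⟨y, retag y c, hq, rfl, sp_retag y c⟩)
    obtain ⟨hR', _⟩ := dR_retag ht
    exact ⟨Sum.elim id id t, hR', t, retag y c, hZ, rfl, sp_retag y c⟩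

lemma eqw_iff_bis {M : Model W} {s t : W} : eqw M s t ↔ Bis M s t := by
  constructor
  · rintro ⟨Z, hZ, hst⟩
    exact ⟨_, proj hZ, Sum.inl s, Sum.inr t, hst, rfl, rfl⟩
  · rintro ⟨ζ, hζ, hst⟩
    exact ⟨_, lift hζ, hst⟩

lemma eqw_refl (M : Model W) [Nonempty W] (a : W) : eqw M a a :=
  eqw_iff_bis.mpr (bis_refl M a)

lemma eqw_symm {M : Model W} {a b : W} (h : eqw M a b) : eqw M b a :=
  eqw_iff_bis.mpr (bis_symm (eqw_iff_bis.mp h))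

lemma eqw_trans {M : Model W} [Nonempty W] {a b c : W} (h1 : eqw M a b) (h2 : eqw M b c) :
    eqw M a c :=
  eqw_iff_bis.mpr (bis_trans (eqw_iff_bis.mp h1) (eqw_iff_bis.mp h2))

end CB

/-- If M is an S5-model (R an equivalence relation), then so is its
∘-bisimulation contraction. -/
theorem stmt16 (W : Type) [Nonempty W] (M : Model W) (h : Equivalence M.R) :
    Equivalence (contraction M).R := by
  constructor
  · rintro ⟨A, s, rfl⟩
    exact ⟨s, CB.eqw_refl M s, s, CB.eqw_refl M s, h.refl s⟩
  · rintro A B ⟨a, ha, b, hb, hab⟩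
    exact ⟨b, hb, a, ha, h.symm hab⟩
  · rintro A B C ⟨a, ha, b, hb, hab⟩ ⟨b', hb', c, hc, hbc⟩
    obtain ⟨w, hA⟩ := A.2
    obtain ⟨u, hB⟩ := B.2
    obtain ⟨v, hC⟩ := C.2
    have hwa : eqw M w a := by rw [hA] at ha; exact ha
    have hub : eqw M u b := by rw [hB] at hb; exact hb
    have hub' : eqw M u b' := by rw [hB] at hb'; exact hb'
    have hvc : eqw M v c := by rw [hC] at hc; exact hc
    have hbb' : CB.Bis M b b' :=
      CB.bis_trans (CB.bis_symm (CB.eqw_iff_bis.mp hub)) (CB.eqw_iff_bis.mp hub')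
    have hbis := CB.bis_isBisim M
    by_cases hb'c : CB.Bis M b' c
    · have hbc' : CB.Bis M b c := CB.bis_trans hbb' hb'c
      by_cases hba : CB.Bis M b a
      · have hac : CB.Bis M a c := CB.bis_trans (CB.bis_symm hba) hbc'
        have hwc : eqw M w c := CB.eqw_trans hwa (CB.eqw_iff_bis.mpr hac)
        exact ⟨c, by rw [hA]; exact hwc, c, hc, h.refl c⟩
      · obtain ⟨a', hRca', haa'⟩ := (hbis.2 _ _ hbc').2.1 a (h.symm hab) hba
        have hwa' : eqw M w a' := CB.eqw_trans hwa (CB.eqw_iff_bis.mpr haa')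
        exact ⟨a', by rw [hA]; exact hwa', c, hc, h.symm hRca'⟩
    · obtain ⟨d, hRbd, hdc⟩ := (hbis.2 _ _ hbb').2.2 c hbc hb'c
      have hvd : eqw M v d := CB.eqw_trans hvc (CB.eqw_iff_bis.mpr (CB.bis_symm hdc))
      exact ⟨a, ha, d, by rw [hC]; exact hvd, h.trans hab hRbd⟩
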